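/- arXiv:2406.01087 — 4 statements merged into one kernel-verified Lean document; each statement's English description precedes it below -/
import Mathlib

section
/- Let X and U be real Hilbert spaces, M : X → X accretive (i.e. ⟨M x₁ - M x₂, x₁ - x₂⟩ ≥ 0 for all x₁, x₂ ∈ X), and B : U → X bounded linear with adjoint B*. Let (x̄, ū) be a steady state pair, i.e. -M(x̄) + B ū = 0, and set ȳ = B* x̄. Suppose x : ℝ → X and u : ℝ → U are such that at time t the curve x has derivative -M(x(t)) + B u(t). Then the function s ↦ (1/2)‖x(s) - x̄‖² is differentiable at t with derivative equal to -⟨x(t) - x̄, M(x(t)) - M(x̄)⟩ + ⟨u(t) - ū, B* x(t) - ȳ⟩, and this derivative satisfies the shifted passivity inequality: it is less than or equal to ⟨u(t) - ū, B* x(t) - ȳ⟩. -/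
open scoped RealInnerProductSpace

/-- Shifted power balance and shifted passivity inequality for a monotone
port-Hamiltonian system `ẋ = -M(x) + Bu`, `y = B* x` with steady state pair `(x̄, ū)`. -/
theorem shifted_passivity
    {X U : Type*} [NormedAddCommGroup X] [InnerProductSpace ℝ X] [CompleteSpace X]
    [NormedAddCommGroup U] [InnerProductSpace ℝ U] [CompleteSpace U]
    (M : X → X) (hM : ∀ x₁ x₂ : X, 0 ≤ ⟪M x₁ - M x₂, x₁ - x₂⟫)
    (B : U →L[ℝ] X) (xbar : X) (ubar : U) (hss : -M xbar + B ubar = 0)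
    (ybar : U) (hybar : ybar = ContinuousLinearMap.adjoint B xbar)
    (x : ℝ → X) (u : ℝ → U) (t : ℝ)
    (hx : HasDerivAt x (-M (x t) + B (u t)) t) :
    HasDerivAt (fun s => (1 / 2 : ℝ) * ‖x s - xbar‖ ^ 2)
      (-⟪x t - xbar, M (x t) - M xbar⟫
        + ⟪u t - ubar, ContinuousLinearMap.adjoint B (x t) - ybar⟫) t
    ∧ -⟪x t - xbar, M (x t) - M xbar⟫
        + ⟪u t - ubar, ContinuousLinearMap.adjoint B (x t) - ybar⟫
      ≤ ⟪u t - ubar, ContinuousLinearMap.adjoint B (x t) - ybar⟫ := by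
  have hB : B ubar = M xbar := by
    have := hss
    rw [neg_add_eq_zero] at this
    exact this.symm
  have hd : HasDerivAt (fun s => x s - xbar) (-M (x t) + B (u t)) t :=
    hx.sub_const xbar
  have hinner : HasDerivAt (fun s => ⟪x s - xbar, x s - xbar⟫)
      (⟪x t - xbar, -M (x t) + B (u t)⟫ + ⟪-M (x t) + B (u t), x t - xbar⟫) t :=
    hd.inner ℝ hd
  have key : ⟪x t - xbar, -M (x t) + B (u t)⟫
      = -⟪x t - xbar, M (x t) - M xbar⟫
        + ⟪u t - ubar, ContinuousLinearMap.adjoint B (x t) - ybar⟫ := by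
    rw [hybar]
    have hadj : ⟪u t - ubar, ContinuousLinearMap.adjoint B (x t)
        - ContinuousLinearMap.adjoint B xbar⟫ = ⟪B (u t - ubar), x t - xbar⟫ := by
      rw [← map_sub, ContinuousLinearMap.adjoint_inner_right]
    rw [hadj, map_sub, hB]
    simp only [inner_add_right, inner_neg_right, inner_sub_right, inner_sub_left,
      real_inner_comm (M xbar) (x t - xbar), real_inner_comm (B (u t)) (x t), real_inner_comm (B (u t)) xbar]
    ring
  constructor
  · have : HasDerivAt (fun s => (1 / 2 : ℝ) * ‖x s - xbar‖ ^ 2)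
        ((1 / 2 : ℝ) * (⟪x t - xbar, -M (x t) + B (u t)⟫
          + ⟪-M (x t) + B (u t), x t - xbar⟫)) t := by
      have heq : (fun s => (1 / 2 : ℝ) * ‖x s - xbar‖ ^ 2)
          = fun s => (1 / 2 : ℝ) * ⟪x s - xbar, x s - xbar⟫ := by
        funext s
        rw [real_inner_self_eq_norm_sq]
      rw [heq]
      exact hinner.const_mul _
    convert this using 1
    rw [← key, real_inner_comm (-M (x t) + B (u t)) (x t - xbar)]
    ring
  · have := hM (x t) xbar
    rw [real_inner_comm] at this
    linarith
end

section
/- Let X and U be real Hilbert spaces, B : U → X bounded linear, and M : X → X strongly accretive at x̄ ∈ X with constant c > 0, i.e. ⟨x - x̄, M(x) - M(x̄)⟩ ≥ c‖x - x̄‖² for all x ∈ X. Let ū ∈ U satisfy -M(x̄) + B ū = 0 and suppose x : ℝ → X satisfies, for every t ≥ 0, HasDerivAt x (-M(x(t)) + B ū) t. Then for all t ≥ 0 one has ‖x(t) - x̄‖ ≤ ‖x(0) - x̄‖ · exp(-c t), i.e. the trajectory converges exponentially to the steady state x̄. -/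
open scoped RealInnerProductSpace

/-!
Along the error `e(t) = x(t) - x̄` the steady-state equation turns the dynamics into
`ė = -(M x - M x̄)`, so strong accretivity gives `d/dt ‖e‖² = -2⟪e, M x - M x̄⟫ ≤ -2c ‖e‖²`.
Grönwall's inequality then bounds `‖e(t)‖²` by `‖e(0)‖² exp(-2ct)`.
-/

open Real

theorem le_mul_exp_of_deriv_le_neg_mul {g g' : ℝ → ℝ} {k : ℝ}
    (hg : ∀ t, 0 ≤ t → HasDerivAt g (g' t) t) (hbound : ∀ t, 0 ≤ t → g' t ≤ -k * g t)
    {t : ℝ} (ht : 0 ≤ t) : g t ≤ g 0 * exp (-k * t) := by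
  have hcont : ContinuousOn g (Set.Icc 0 t) :=
    fun s hs => (hg s hs.1).continuousAt.continuousWithinAt
  have := le_gronwallBound_of_liminf_deriv_right_le (K := -k) (ε := 0) hcont
    (fun s hs _ hr => (hg s hs.1).hasDerivWithinAt.liminf_right_slope_le hr) le_rfl
    (fun s hs => (add_zero (-k * g s)).symm ▸ hbound s hs.1) t ⟨ht, le_rfl⟩
  rwa [gronwallBound_ε0, sub_zero] at this

theorem norm_le_mul_exp_of_inner_deriv_le {E : Type*} [NormedAddCommGroup E]
    [InnerProductSpace ℝ E] {f f' : ℝ → E} {c : ℝ}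
    (hf : ∀ t, 0 ≤ t → HasDerivAt f (f' t) t)
    (hdiss : ∀ t, 0 ≤ t → ⟪f t, f' t⟫ ≤ -c * ‖f t‖ ^ 2)
    {t : ℝ} (ht : 0 ≤ t) : ‖f t‖ ≤ ‖f 0‖ * exp (-c * t) := by
  have hsq : ‖f t‖ ^ 2 ≤ ‖f 0‖ ^ 2 * exp (-(2 * c) * t) :=
    le_mul_exp_of_deriv_le_neg_mul (fun s hs => (hf s hs).norm_sq)
      (fun s hs => by linarith [hdiss s hs]) ht
  have hexp : exp (-(2 * c) * t) = exp (-c * t) ^ 2 := by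
    rw [← exp_nat_mul]; ring_nf
  rw [hexp, ← mul_pow] at hsq
  exact (pow_le_pow_iff_left₀ (norm_nonneg _) (by positivity) two_ne_zero).1 hsq

theorem exponential_convergence_strongly_accretive_general
    {X U : Type*} [NormedAddCommGroup X] [InnerProductSpace ℝ X]
    [NormedAddCommGroup U] [InnerProductSpace ℝ U]
    (M : X → X) (B : U →L[ℝ] X) (xbar : X) (ubar : U) (c : ℝ)
    (hM : ∀ x : X, c * ‖x - xbar‖ ^ 2 ≤ ⟪x - xbar, M x - M xbar⟫)
    (hss : -M xbar + B ubar = 0)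
    (x : ℝ → X) (hx : ∀ t : ℝ, 0 ≤ t → HasDerivAt x (-M (x t) + B ubar) t) :
    ∀ t : ℝ, 0 ≤ t → ‖x t - xbar‖ ≤ ‖x 0 - xbar‖ * Real.exp (-c * t) := by
  have hB : B ubar = M xbar := (neg_add_eq_zero.1 hss).symm
  have herr : ∀ t, 0 ≤ t → HasDerivAt (fun s => x s - xbar) (-(M (x t) - M xbar)) t := by
    intro t ht
    simpa [hB, neg_add_eq_sub] using (hx t ht).sub_const xbar
  intro t ht
  refine norm_le_mul_exp_of_inner_deriv_le herr (fun s _ => ?_) ht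
  rw [inner_neg_right]
  linarith [hM (x s)]

/-- Exponential convergence to the steady state for a monotone pH system whose
operator `M` is strongly accretive at the steady state `x̄`, under the constant
input `u ≡ ū`. -/
theorem exponential_convergence_strongly_accretive
    {X U : Type*} [NormedAddCommGroup X] [InnerProductSpace ℝ X] [CompleteSpace X]
    [NormedAddCommGroup U] [InnerProductSpace ℝ U] [CompleteSpace U]
    (M : X → X) (B : U →L[ℝ] X) (xbar : X) (ubar : U) (c : ℝ) (hc : 0 < c)
    (hM : ∀ x : X, c * ‖x - xbar‖ ^ 2 ≤ ⟪x - xbar, M x - M xbar⟫)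
    (hss : -M xbar + B ubar = 0)
    (x : ℝ → X) (hx : ∀ t : ℝ, 0 ≤ t → HasDerivAt x (-M (x t) + B ubar) t) :
    ∀ t : ℝ, 0 ≤ t → ‖x t - xbar‖ ≤ ‖x 0 - xbar‖ * Real.exp (-c * t) :=
  exponential_convergence_strongly_accretive_general M B xbar ubar c hM hss x hx
end

section
/- Let X₁, X₂, U₁, U₂ be real Hilbert spaces, let M₁ : X₁ → X₁ be strongly accretive at x̄₁ with constant c₁ > 0 and M₂ : X₂ → X₂ be strongly accretive at x̄₂ with constant c₂ > 0, and let B₁ : U₁ → X₁, B₂ : U₂ → X₂, 𝓕 : U₂ → U₁ be bounded linear with adjoints B₁*, B₂*, 𝓕*. Then the interconnected operator M(x₁, x₂) = (M₁(x₁) + B₁ 𝓕 B₂* x₂, M₂(x₂) - B₂ 𝓕* B₁* x₁) is strongly accretive at (x̄₁, x̄₂) with constant min(c₁, c₂): for all (x₁, x₂) ∈ X₁ × X₂, ⟨M(x₁,x₂) - M(x̄₁,x̄₂), (x₁ - x̄₁, x₂ - x̄₂)⟩ ≥ min(c₁, c₂) · ‖(x₁ - x̄₁, x₂ - x̄₂)‖².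 -/
open scoped RealInnerProductSpace

/-- The power-preserving interconnection of two operators that are strongly accretive
at `x̄₁` resp. `x̄₂` is strongly accretive at `(x̄₁, x̄₂)` with constant `min c₁ c₂`. -/
theorem interconnection_strongly_accretive
    {X₁ X₂ U₁ U₂ : Type*}
    [NormedAddCommGroup X₁] [InnerProductSpace ℝ X₁] [CompleteSpace X₁]
    [NormedAddCommGroup X₂] [InnerProductSpace ℝ X₂] [CompleteSpace X₂]
    [NormedAddCommGroup U₁] [InnerProductSpace ℝ U₁] [CompleteSpace U₁]
    [NormedAddCommGroup U₂] [InnerProductSpace ℝ U₂] [CompleteSpace U₂]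
    (M₁ : X₁ → X₁) (M₂ : X₂ → X₂) (xbar₁ : X₁) (xbar₂ : X₂)
    (c₁ c₂ : ℝ) (hc₁ : 0 < c₁) (hc₂ : 0 < c₂)
    (hM₁ : ∀ x : X₁, c₁ * ‖x - xbar₁‖ ^ 2 ≤ ⟪x - xbar₁, M₁ x - M₁ xbar₁⟫)
    (hM₂ : ∀ x : X₂, c₂ * ‖x - xbar₂‖ ^ 2 ≤ ⟪x - xbar₂, M₂ x - M₂ xbar₂⟫)
    (B₁ : U₁ →L[ℝ] X₁) (B₂ : U₂ →L[ℝ] X₂) (F : U₂ →L[ℝ] U₁) :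
    ∀ x₁ : X₁, ∀ x₂ : X₂,
      min c₁ c₂ * (‖x₁ - xbar₁‖ ^ 2 + ‖x₂ - xbar₂‖ ^ 2)
        ≤ ⟪(M₁ x₁ + B₁ (F (ContinuousLinearMap.adjoint B₂ x₂)))
            - (M₁ xbar₁ + B₁ (F (ContinuousLinearMap.adjoint B₂ xbar₂))), x₁ - xbar₁⟫
          + ⟪(M₂ x₂ - B₂ (ContinuousLinearMap.adjoint F (ContinuousLinearMap.adjoint B₁ x₁)))
            - (M₂ xbar₂ - B₂ (ContinuousLinearMap.adjoint F (ContinuousLinearMap.adjoint B₁ xbar₁))),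
            x₂ - xbar₂⟫ := by
  intro x₁ x₂
  set a := x₁ - xbar₁ with ha
  set b := x₂ - xbar₂ with hb
  have cross :
      ⟪B₁ (F ((ContinuousLinearMap.adjoint B₂) b)), a⟫
        = ⟪B₂ ((ContinuousLinearMap.adjoint F) ((ContinuousLinearMap.adjoint B₁) a)), b⟫ := by
    calc ⟪B₁ (F ((ContinuousLinearMap.adjoint B₂) b)), a⟫
        = ⟪F ((ContinuousLinearMap.adjoint B₂) b), (ContinuousLinearMap.adjoint B₁) a⟫ :=
          (ContinuousLinearMap.adjoint_inner_right B₁ _ _).symm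
      _ = ⟪(ContinuousLinearMap.adjoint B₂) b,
            (ContinuousLinearMap.adjoint F) ((ContinuousLinearMap.adjoint B₁) a)⟫ :=
          (ContinuousLinearMap.adjoint_inner_right F _ _).symm
      _ = ⟪b, B₂ ((ContinuousLinearMap.adjoint F) ((ContinuousLinearMap.adjoint B₁) a))⟫ :=
          ContinuousLinearMap.adjoint_inner_left B₂ _ _
      _ = _ := real_inner_comm _ _
  have e1 : (M₁ x₁ + B₁ (F (ContinuousLinearMap.adjoint B₂ x₂)))
      - (M₁ xbar₁ + B₁ (F (ContinuousLinearMap.adjoint B₂ xbar₂)))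
      = (M₁ x₁ - M₁ xbar₁) + B₁ (F ((ContinuousLinearMap.adjoint B₂) b)) := by
    simp only [hb, map_sub]; abel
  have e2 : (M₂ x₂ - B₂ (ContinuousLinearMap.adjoint F (ContinuousLinearMap.adjoint B₁ x₁)))
      - (M₂ xbar₂ - B₂ (ContinuousLinearMap.adjoint F (ContinuousLinearMap.adjoint B₁ xbar₁)))
      = (M₂ x₂ - M₂ xbar₂) - B₂ ((ContinuousLinearMap.adjoint F) ((ContinuousLinearMap.adjoint B₁) a)) := by
    simp only [ha, map_sub]; abel
  rw [e1, e2]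
  simp only [inner_add_left, inner_sub_left]
  rw [cross]
  have h1 := hM₁ x₁
  have h2 := hM₂ x₂
  rw [real_inner_comm] at h1 h2
  simp only [inner_sub_left] at h1 h2
  have hmin1 : min c₁ c₂ * ‖a‖ ^ 2 ≤ c₁ * ‖a‖ ^ 2 :=
    mul_le_mul_of_nonneg_right (min_le_left _ _) (by positivity)
  have hmin2 : min c₁ c₂ * ‖b‖ ^ 2 ≤ c₂ * ‖b‖ ^ 2 :=
    mul_le_mul_of_nonneg_right (min_le_right _ _) (by positivity)
  linarith [h1, h2]
end

section
/- Let X₁, X₂, U₁, U₂ be real Hilbert spaces, let M₁ : X₁ → X₁ be strongly accretive at x̄₁ with constant c₁ > 0 and M₂ : X₂ → X₂ strongly accretive at x̄₂ with constant c₂ > 0, and let B₁ : U₁ → X₁, B₂ : U₂ → X₂, 𝓕 : U₂ → U₁ be bounded linear with adjoints B₁*, B₂*, 𝓕*. Define M(x₁, x₂) = (M₁(x₁) + B₁ 𝓕 B₂* x₂, M₂(x₂) - B₂ 𝓕* B₁* x₁) and assume M(x̄₁, x̄₂) = 0. If (x₁, x₂) : ℝ → X₁ × X₂ satisfies HasDerivAt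 (x₁, x₂) (-M(x₁(t), x₂(t))) t for all t ≥ 0, then for all t ≥ 0, ‖(x₁(t) - x̄₁, x₂(t) - x̄₂)‖ ≤ ‖(x₁(0) - x̄₁, x₂(0) - x̄₂)‖ · exp(-min(c₁, c₂) t); i.e. the power-preservingly interconnected system with zero external input converges exponentially to the equilibrium (x̄₁, x̄₂). -/
/-!
The energy `E = ‖x₁ - x̄₁‖² + ‖x₂ - x̄₂‖²` is a Lyapunov function. Along a trajectory,
`E' = -2⟪x - x̄, M x - M x̄⟫`; the interconnection terms `⟪a, B₁ 𝓕 B₂* b⟫` and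
`⟪b, B₂ 𝓕* B₁* a⟫` are equal, so they cancel, and strong accretivity of `M₁` and `M₂` gives
`E' ≤ -2 min(c₁, c₂) E`. Grönwall's inequality then yields `E t ≤ E 0 · exp(-2 min(c₁, c₂) t)`,
and taking square roots gives the claim.
-/

open scoped RealInnerProductSpace
open ContinuousLinearMap Real Set

theorem le_mul_exp_of_hasDerivAt_le_neg_mul {g g' : ℝ → ℝ} {k t : ℝ} (ht : 0 ≤ t)
    (hg : ∀ s ∈ Icc 0 t, HasDerivAt g (g' s) s) (hbound : ∀ s ∈ Ico 0 t, g' s ≤ -k * g s) :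
    g t ≤ g 0 * exp (-k * t) := by
  have := le_gronwallBound_of_liminf_deriv_right_le (K := -k) (ε := 0) (f' := g')
    (fun s hs => (hg s hs).continuousAt.continuousWithinAt)
    (fun s hs _ hr => (hg s (Ico_subset_Icc_self hs)).hasDerivWithinAt.liminf_right_slope_le hr)
    le_rfl (fun s hs => by rw [add_zero, neg_mul, ← neg_mul]; exact hbound s hs) t ⟨ht, le_rfl⟩
  simpa [gronwallBound_ε0] using this

theorem sqrt_le_sqrt_mul_exp_of_le_mul_exp_two_mul {a b c t : ℝ} (hb : 0 ≤ b)
    (h : a ≤ b * exp (-(2 * c) * t)) : √a ≤ √b * exp (-c * t) := by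
  have hsq : exp (-(2 * c) * t) = exp (-c * t) * exp (-c * t) := by
    rw [← exp_add]; ring_nf
  calc √a ≤ √(b * exp (-(2 * c) * t)) := sqrt_le_sqrt h
    _ = √b * exp (-c * t) := by
      rw [sqrt_mul hb, hsq, sqrt_mul_self (exp_pos _).le]

theorem HasDerivAt.norm_sq_sub_add_norm_sq_sub {X₁ X₂ : Type*}
    [NormedAddCommGroup X₁] [InnerProductSpace ℝ X₁] [NormedAddCommGroup X₂] [InnerProductSpace ℝ X₂]
    {x₁ : ℝ → X₁} {x₂ : ℝ → X₂} {v₁ : X₁} {v₂ : X₂}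
    {t : ℝ} (h : HasDerivAt (fun s => (x₁ s, x₂ s)) (v₁, v₂) t) (y₁ : X₁) (y₂ : X₂) :
    HasDerivAt (fun s => ‖x₁ s - y₁‖ ^ 2 + ‖x₂ s - y₂‖ ^ 2)
      (2 * ⟪x₁ t - y₁, v₁⟫ + 2 * ⟪x₂ t - y₂, v₂⟫) t := by
  have h₁ : HasDerivAt x₁ v₁ t := (fst ℝ X₁ X₂).hasFDerivAt.comp_hasDerivAt t h
  have h₂ : HasDerivAt x₂ v₂ t := (snd ℝ X₁ X₂).hasFDerivAt.comp_hasDerivAt t h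
  exact ((h₁.sub_const y₁).norm_sq).add ((h₂.sub_const y₂).norm_sq)

section Interconnection

variable {X₁ X₂ U₁ U₂ : Type*}
  [NormedAddCommGroup X₁] [InnerProductSpace ℝ X₁] [CompleteSpace X₁]
  [NormedAddCommGroup X₂] [InnerProductSpace ℝ X₂] [CompleteSpace X₂]
  [NormedAddCommGroup U₁] [InnerProductSpace ℝ U₁] [CompleteSpace U₁]
  [NormedAddCommGroup U₂] [InnerProductSpace ℝ U₂] [CompleteSpace U₂]

theorem inner_comp_adjoint_eq_inner_adjoint_comp (B₁ : U₁ →L[ℝ] X₁) (B₂ : U₂ →L[ℝ] X₂)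
    (F : U₂ →L[ℝ] U₁) (a : X₁) (b : X₂) :
    ⟪a, B₁ (F (adjoint B₂ b))⟫ = ⟪b, B₂ (adjoint F (adjoint B₁ a))⟫ := by
  rw [← adjoint_inner_left, ← adjoint_inner_left, real_inner_comm, adjoint_inner_left]

theorem min_mul_energy_le_inner_interconnection {M₁ : X₁ → X₁} {M₂ : X₂ → X₂}
    {xbar₁ : X₁} {xbar₂ : X₂} {c₁ c₂ : ℝ}
    (hM₁ : ∀ x : X₁, c₁ * ‖x - xbar₁‖ ^ 2 ≤ ⟪x - xbar₁, M₁ x - M₁ xbar₁⟫)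
    (hM₂ : ∀ x : X₂, c₂ * ‖x - xbar₂‖ ^ 2 ≤ ⟪x - xbar₂, M₂ x - M₂ xbar₂⟫)
    (B₁ : U₁ →L[ℝ] X₁) (B₂ : U₂ →L[ℝ] X₂) (F : U₂ →L[ℝ] U₁)
    (heq₁ : M₁ xbar₁ + B₁ (F (adjoint B₂ xbar₂)) = 0)
    (heq₂ : M₂ xbar₂ - B₂ (adjoint F (adjoint B₁ xbar₁)) = 0) (x₁ : X₁) (x₂ : X₂) :
    min c₁ c₂ * (‖x₁ - xbar₁‖ ^ 2 + ‖x₂ - xbar₂‖ ^ 2) ≤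
      ⟪x₁ - xbar₁, M₁ x₁ + B₁ (F (adjoint B₂ x₂))⟫ +
        ⟪x₂ - xbar₂, M₂ x₂ - B₂ (adjoint F (adjoint B₁ x₁))⟫ := by
  have h₁ : M₁ x₁ + B₁ (F (adjoint B₂ x₂)) =
      (M₁ x₁ - M₁ xbar₁) + B₁ (F (adjoint B₂ (x₂ - xbar₂))) := by
    rw [eq_neg_of_add_eq_zero_left heq₁, map_sub, map_sub, map_sub]; abel
  have h₂ : M₂ x₂ - B₂ (adjoint F (adjoint B₁ x₁)) =
      (M₂ x₂ - M₂ xbar₂) - B₂ (adjoint F (adjoint B₁ (x₁ - xbar₁))) := by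
    rw [sub_eq_zero.mp heq₂, map_sub, map_sub, map_sub]; abel
  rw [h₁, h₂, inner_add_right, inner_sub_right (x₂ - xbar₂) (M₂ x₂ - M₂ xbar₂),
    inner_comp_adjoint_eq_inner_adjoint_comp B₁ B₂ F]
  have hmin₁ := mul_le_mul_of_nonneg_right (min_le_left c₁ c₂) (sq_nonneg ‖x₁ - xbar₁‖)
  have hmin₂ := mul_le_mul_of_nonneg_right (min_le_right c₁ c₂) (sq_nonneg ‖x₂ - xbar₂‖)
  linarith [hM₁ x₁, hM₂ x₂]

end Interconnection

theorem interconnected_exponential_convergence_general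
    {X₁ X₂ U₁ U₂ : Type*}
    [NormedAddCommGroup X₁] [InnerProductSpace ℝ X₁] [CompleteSpace X₁]
    [NormedAddCommGroup X₂] [InnerProductSpace ℝ X₂] [CompleteSpace X₂]
    [NormedAddCommGroup U₁] [InnerProductSpace ℝ U₁] [CompleteSpace U₁]
    [NormedAddCommGroup U₂] [InnerProductSpace ℝ U₂] [CompleteSpace U₂]
    (M₁ : X₁ → X₁) (M₂ : X₂ → X₂) (xbar₁ : X₁) (xbar₂ : X₂)
    (c₁ c₂ : ℝ)
    (hM₁ : ∀ x : X₁, c₁ * ‖x - xbar₁‖ ^ 2 ≤ ⟪x - xbar₁, M₁ x - M₁ xbar₁⟫)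
    (hM₂ : ∀ x : X₂, c₂ * ‖x - xbar₂‖ ^ 2 ≤ ⟪x - xbar₂, M₂ x - M₂ xbar₂⟫)
    (B₁ : U₁ →L[ℝ] X₁) (B₂ : U₂ →L[ℝ] X₂) (F : U₂ →L[ℝ] U₁)
    (heq₁ : M₁ xbar₁ + B₁ (F (ContinuousLinearMap.adjoint B₂ xbar₂)) = 0)
    (heq₂ : M₂ xbar₂ - B₂ (ContinuousLinearMap.adjoint F (ContinuousLinearMap.adjoint B₁ xbar₁)) = 0)
    (x₁ : ℝ → X₁) (x₂ : ℝ → X₂)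
    (hx : ∀ t : ℝ, 0 ≤ t →
      HasDerivAt (fun s => (x₁ s, x₂ s))
        (-(M₁ (x₁ t) + B₁ (F (ContinuousLinearMap.adjoint B₂ (x₂ t)))),
         -(M₂ (x₂ t) - B₂ (ContinuousLinearMap.adjoint F (ContinuousLinearMap.adjoint B₁ (x₁ t))))) t) :
    ∀ t : ℝ, 0 ≤ t →
      Real.sqrt (‖x₁ t - xbar₁‖ ^ 2 + ‖x₂ t - xbar₂‖ ^ 2)
        ≤ Real.sqrt (‖x₁ 0 - xbar₁‖ ^ 2 + ‖x₂ 0 - xbar₂‖ ^ 2)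
          * Real.exp (-(min c₁ c₂) * t) := by
  intro t ht
  have hdecay := le_mul_exp_of_hasDerivAt_le_neg_mul (k := 2 * min c₁ c₂) ht
    (fun s hs => (hx s hs.1).norm_sq_sub_add_norm_sq_sub xbar₁ xbar₂)
    (fun s _ => by
      have := min_mul_energy_le_inner_interconnection hM₁ hM₂ B₁ B₂ F heq₁ heq₂ (x₁ s) (x₂ s)
      simp only [inner_neg_right]
      linarith)
  exact sqrt_le_sqrt_mul_exp_of_le_mul_exp_two_mul (by positivity) hdecay

/-- Exponential convergence of the power-preservingly interconnected system of two
strongly accretive monotone pH systems with zero external input: the product-norm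
distance to the equilibrium `(x̄₁, x̄₂)` decays with rate `min c₁ c₂`. -/
theorem interconnected_exponential_convergence
    {X₁ X₂ U₁ U₂ : Type*}
    [NormedAddCommGroup X₁] [InnerProductSpace ℝ X₁] [CompleteSpace X₁]
    [NormedAddCommGroup X₂] [InnerProductSpace ℝ X₂] [CompleteSpace X₂]
    [NormedAddCommGroup U₁] [InnerProductSpace ℝ U₁] [CompleteSpace U₁]
    [NormedAddCommGroup U₂] [InnerProductSpace ℝ U₂] [CompleteSpace U₂]
    (M₁ : X₁ → X₁) (M₂ : X₂ → X₂) (xbar₁ : X₁) (xbar₂ : X₂)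
    (c₁ c₂ : ℝ) (hc₁ : 0 < c₁) (hc₂ : 0 < c₂)
    (hM₁ : ∀ x : X₁, c₁ * ‖x - xbar₁‖ ^ 2 ≤ ⟪x - xbar₁, M₁ x - M₁ xbar₁⟫)
    (hM₂ : ∀ x : X₂, c₂ * ‖x - xbar₂‖ ^ 2 ≤ ⟪x - xbar₂, M₂ x - M₂ xbar₂⟫)
    (B₁ : U₁ →L[ℝ] X₁) (B₂ : U₂ →L[ℝ] X₂) (F : U₂ →L[ℝ] U₁)
    (heq₁ : M₁ xbar₁ + B₁ (F (ContinuousLinearMap.adjoint B₂ xbar₂)) = 0)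
    (heq₂ : M₂ xbar₂ - B₂ (ContinuousLinearMap.adjoint F (ContinuousLinearMap.adjoint B₁ xbar₁)) = 0)
    (x₁ : ℝ → X₁) (x₂ : ℝ → X₂)
    (hx : ∀ t : ℝ, 0 ≤ t →
      HasDerivAt (fun s => (x₁ s, x₂ s))
        (-(M₁ (x₁ t) + B₁ (F (ContinuousLinearMap.adjoint B₂ (x₂ t)))),
         -(M₂ (x₂ t) - B₂ (ContinuousLinearMap.adjoint F (ContinuousLinearMap.adjoint B₁ (x₁ t))))) t) :
    ∀ t : ℝ, 0 ≤ t →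
      Real.sqrt (‖x₁ t - xbar₁‖ ^ 2 + ‖x₂ t - xbar₂‖ ^ 2)
        ≤ Real.sqrt (‖x₁ 0 - xbar₁‖ ^ 2 + ‖x₂ 0 - xbar₂‖ ^ 2)
          * Real.exp (-(min c₁ c₂) * t) :=
  interconnected_exponential_convergence_general M₁ M₂ xbar₁ xbar₂ c₁ c₂ hM₁ hM₂ B₁ B₂ F heq₁ heq₂
    x₁ x₂ hx
end
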